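/- arXiv:1509.06265 — 2 statements merged into one kernel-verified Lean document; each statement's English description precedes it below -/
import Mathlib

section
/- Let x be a real number represented by (m,n,p) with -1 < m/n < 0. Let N be an even natural number with N > 2^((p+11)/3), and assume p ≥ 2⌈log₂(N/2)⌉ + 4. Then exp(x) is approximated by A = 1/(N/(N + 2m/n))^(N/2) with relative error less than 1/2^(p - 2⌈log₂(N/2)⌉ - 4); that is, |exp(x) - A| < |A| * (1/2^(p - 2⌈log₂(N/2)⌉ - 4)). -/
/-! With `k = N / 2` and `r = m / n`, the approximant is `A = (1 + r / k) ^ k`. Since `log (1 + t)`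
lies between `t / (1 + t)` and `t`, `A` lies between `exp r * (1 - r ^ 2 / (k + r))` and `exp r`,
a relative error below `1 / (k - 1)`; and `exp x` is within relative error `2 / 2 ^ p` of `exp r`.
The hypothesis `N > 2 ^ ((p + 11) / 3)` says `256 * 2 ^ p < k ^ 3`, which pushes the sum of the two
errors below `16 * k ^ 2 / 2 ^ p ≤ 1 / 2 ^ (p - 2 * ⌈log₂ k⌉ - 4)`. -/

open Real

theorem exp_mul_one_sub_le_one_add_div_pow {k : ℕ} {r : ℝ} (hk : k ≠ 0) (hr : -(k : ℝ) < r) :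
    exp r * (1 - r ^ 2 / (k + r)) ≤ (1 + r / k) ^ k := by
  have hk₀ : (0 : ℝ) < k := by positivity
  have hkr : (0 : ℝ) < k + r := by linarith
  have hB : 0 < 1 + r / k := by rw [one_add_div hk₀.ne']; positivity
  have hlog : r - r ^ 2 / (k + r) ≤ k * log (1 + r / k) := by
    have h := mul_le_mul_of_nonneg_left (one_sub_inv_le_log_of_pos hB) hk₀.le
    have heq : (k : ℝ) * (1 - (1 + r / k)⁻¹) = r - r ^ 2 / (k + r) := by
      field_simp
      ring
    linarith
  calc exp r * (1 - r ^ 2 / (k + r))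
      ≤ exp r * exp (-(r ^ 2 / (k + r))) := by
        gcongr
        linarith [add_one_le_exp (-(r ^ 2 / (k + r)))]
    _ = exp (r - r ^ 2 / (k + r)) := by rw [← exp_add, sub_eq_add_neg]
    _ ≤ exp (k * log (1 + r / k)) := exp_le_exp.2 hlog
    _ = (1 + r / k) ^ k := by rw [← log_pow, exp_log (pow_pos hB k)]

theorem one_add_div_pow_le_exp {k : ℕ} {r : ℝ} (hr : -(k : ℝ) ≤ r) :
    (1 + r / k) ^ k ≤ exp r := by
  simpa [sub_eq_add_neg, neg_div] using one_sub_div_pow_le_exp_neg (n := k) (t := -r) (by linarith)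

theorem abs_exp_sub_exp_le {x r : ℝ} (h : |x - r| ≤ 1) :
    |exp x - exp r| ≤ exp r * (2 * |x - r|) := by
  have heq : exp x - exp r = exp r * (exp (x - r) - 1) := by
    rw [mul_sub, ← exp_add]; ring_nf
  rw [heq, abs_mul, abs_of_pos (exp_pos r)]
  exact mul_le_mul_of_nonneg_left (abs_exp_sub_one_le h) (exp_pos r).le

theorem two_pow_lt_pow_three_of_rpow_lt {p : ℕ} {y : ℝ} (h : (2 : ℝ) ^ (((p : ℝ) + 11) / 3) < y) :
    (2 : ℝ) ^ (p + 11) < y ^ 3 := by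
  have h3 := pow_lt_pow_left₀ h (by positivity) (by norm_num : (3 : ℕ) ≠ 0)
  rwa [← rpow_natCast _ 3, ← rpow_mul (by norm_num), Nat.cast_ofNat,
    div_mul_cancel₀ _ (by norm_num), ← Nat.cast_ofNat (n := 11), ← Nat.cast_add, rpow_natCast] at h3

theorem two_div_add_le_one_sub_mul {P K δ η : ℝ} (hP : 0 < P) (hK : 16 < K)
    (hKP : 256 * P < K ^ 3) (hδ : δ ≤ 1 / (K - 1)) (hη : 16 * K ^ 2 / P ≤ η) :
    2 / P + δ ≤ (1 - δ) * η := by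
  have hδK : δ * (K - 1) ≤ 1 := by rwa [le_div_iff₀ (by linarith)] at hδ
  have hδ1 : 0 ≤ 1 - δ := by nlinarith
  suffices 2 + δ * P ≤ (1 - δ) * (16 * K ^ 2) by
    calc 2 / P + δ = (2 + δ * P) / P := by field_simp
      _ ≤ (1 - δ) * (16 * K ^ 2) / P := by gcongr
      _ = (1 - δ) * (16 * K ^ 2 / P) := by ring
      _ ≤ (1 - δ) * η := by gcongr
  suffices (2 + δ * P) * (K - 1) ≤ (1 - δ) * (16 * K ^ 2) * (K - 1) from
    le_of_mul_le_mul_right this (by linarith)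
  nlinarith

theorem sixteen_mul_sq_div_two_pow_le (k p : ℕ) (hp : 2 * Nat.clog 2 k + 4 ≤ p) :
    16 * (k : ℝ) ^ 2 / 2 ^ p ≤ 1 / 2 ^ (p - 2 * Nat.clog 2 k - 4) := by
  set c := Nat.clog 2 k
  have hk : (k : ℝ) ≤ 2 ^ c := by exact_mod_cast Nat.le_pow_clog (by norm_num) k
  have hsplit : (2 : ℝ) ^ p = 2 ^ (p - 2 * c - 4) * (16 * (2 ^ c) ^ 2) := by
    rw [← pow_mul, show (16 : ℝ) = 2 ^ 4 by norm_num, ← pow_add, ← pow_add]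
    congr 1
    omega
  rw [hsplit, div_le_div_iff₀ (by positivity) (by positivity)]
  have : (k : ℝ) ^ 2 ≤ (2 ^ c) ^ 2 := pow_le_pow_left₀ (by positivity) hk 2
  nlinarith [pow_pos (two_pos (α := ℝ)) (p - 2 * c - 4)]

theorem sq_div_add_le_inv_sub_one {r K : ℝ} (hr : |r| < 1) (hK : 1 < K) :
    r ^ 2 / (K + r) ≤ 1 / (K - 1) := by
  have hr' := abs_lt.1 hr
  have hr2 : r ^ 2 ≤ 1 := by nlinarith [sq_abs r, abs_nonneg r]
  exact div_le_div₀ zero_le_one hr2 (by linarith) (by linarith)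

theorem abs_sub_lt_abs_mul_of_sandwich {E A y δ ε η : ℝ} (hE : 0 < E) (hlow : E * (1 - δ) ≤ A)
    (hup : A ≤ E) (hy : |y - E| < E * ε) (hsum : ε + δ ≤ (1 - δ) * η) (hη : 0 ≤ η) :
    |y - A| < |A| * η :=
  calc |y - A| ≤ |y - E| + |E - A| := abs_sub_le _ _ _
    _ < E * ε + E * δ := by rw [abs_of_nonneg (sub_nonneg.2 hup)]; linarith
    _ ≤ E * (1 - δ) * η := by nlinarith
    _ ≤ |A| * η := by gcongr; exact hlow.trans (le_abs_self A)

theorem exp_represented_neg_base_general (x : ℝ) (m n : ℤ) (p N : ℕ)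
    (hx : |x - (m : ℝ) / (n : ℝ)| < |(m : ℝ) / (n : ℝ)| * (1 / 2 ^ p))
    (hmn₀ : -1 < (m : ℝ) / (n : ℝ)) (hmn₁ : (m : ℝ) / (n : ℝ) < 0)
    (hNeven : Even N)
    (hN : (N : ℝ) > (2 : ℝ) ^ (((p : ℝ) + 11) / 3))
    (hp : 2 * Nat.clog 2 (N / 2) + 4 ≤ p) :
    |Real.exp x - 1 / ((N : ℝ) / ((N : ℝ) + 2 * ((m : ℝ) / (n : ℝ)))) ^ (N / 2)| <
      |1 / ((N : ℝ) / ((N : ℝ) + 2 * ((m : ℝ) / (n : ℝ)))) ^ (N / 2)| *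
        (1 / 2 ^ (p - 2 * Nat.clog 2 (N / 2) - 4)) := by
  set r := (m : ℝ) / (n : ℝ)
  obtain ⟨k, rfl⟩ := hNeven.two_dvd
  rw [Nat.mul_div_cancel_left k two_pos] at hp ⊢
  push_cast at hN ⊢
  have hr : |r| < 1 := abs_lt.2 ⟨hmn₀, by linarith⟩
  have hP : (16 : ℝ) ≤ 2 ^ p := by
    calc (16 : ℝ) = 2 ^ 4 := by norm_num
      _ ≤ 2 ^ p := pow_le_pow_right₀ one_le_two (by omega)
  have hcube : 256 * (2 : ℝ) ^ p < (k : ℝ) ^ 3 := by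
    have := two_pow_lt_pow_three_of_rpow_lt hN
    rw [pow_add] at this
    nlinarith
  have hk : (16 : ℝ) < k := (Odd.strictMono_pow (by decide : Odd 3)).lt_iff_lt.1 (by linarith)
  have hbase : 1 / (2 * (k : ℝ) / (2 * k + 2 * r)) ^ k = (1 + r / k) ^ k := by
    rw [← one_div_pow, one_div_div]
    congr 1
    field_simp
  rw [hbase]
  have hxr : |x - r| < 1 / 2 ^ p :=
    hx.trans_le (mul_le_of_le_one_left (by positivity) hr.le)
  have hy : |exp x - exp r| < exp r * (2 / 2 ^ p) :=
    calc |exp x - exp r| ≤ exp r * (2 * |x - r|) :=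
          abs_exp_sub_exp_le (hxr.le.trans (by rw [div_le_one (by positivity)]; linarith))
      _ < exp r * (2 / 2 ^ p) := by gcongr; linarith [mul_one_div 2 ((2 : ℝ) ^ p)]
  refine abs_sub_lt_abs_mul_of_sandwich (exp_pos r)
    (exp_mul_one_sub_le_one_add_div_pow (by rintro rfl; norm_num at hk)
      (by linarith [abs_lt.1 hr]))
    (one_add_div_pow_le_exp (by linarith [abs_lt.1 hr])) hy ?_ (by positivity)
  exact two_div_add_le_one_sub_mul (by positivity) hk hcube
    (sq_div_add_le_inv_sub_one hr (by linarith)) (sixteen_mul_sq_div_two_pow_le k p hp)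

/-- Riemann-sum approximation of `exp x` in the base interval `-1 < m/n < 0`:
if `x` is represented by `(m, n, p)`, `N` is even with `N > 2 ^ ((p + 11) / 3)`
(real power), and `p ≥ 2 ⌈log₂ (N / 2)⌉ + 4`, then
`A = 1 / (N / (N + 2 m / n)) ^ (N / 2)` approximates `exp x` with relative error
less than `1 / 2 ^ (p - 2 ⌈log₂ (N / 2)⌉ - 4)`. -/
theorem exp_represented_neg_base (x : ℝ) (m n : ℤ) (p N : ℕ)
    (hm : m ≠ 0) (hn : n ≠ 0)
    (hx : |x - (m : ℝ) / (n : ℝ)| < |(m : ℝ) / (n : ℝ)| * (1 / 2 ^ p))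
    (hmn₀ : -1 < (m : ℝ) / (n : ℝ)) (hmn₁ : (m : ℝ) / (n : ℝ) < 0)
    (hNeven : Even N)
    (hN : (N : ℝ) > (2 : ℝ) ^ (((p : ℝ) + 11) / 3))
    (hp : 2 * Nat.clog 2 (N / 2) + 4 ≤ p) :
    |Real.exp x - 1 / ((N : ℝ) / ((N : ℝ) + 2 * ((m : ℝ) / (n : ℝ)))) ^ (N / 2)| <
      |1 / ((N : ℝ) / ((N : ℝ) + 2 * ((m : ℝ) / (n : ℝ)))) ^ (N / 2)| *
        (1 / 2 ^ (p - 2 * Nat.clog 2 (N / 2) - 4)) :=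
  exp_represented_neg_base_general x m n p N hx hmn₀ hmn₁ hNeven hN hp
end

section
/- Let x > 0 be a real number and N ≥ 1 a natural number. Then the upper Riemann sum S = (x/N) · Σ_{i=0}^{N-1} 1/(1 + ((i·x)/N)²) for the integral of 1/(1+t²) over [0,x] satisfies |S - arctan(x)| ≤ x³ / (N·(1 + x²)). -/
/-!
The Riemann sum of a function that is antitone on `[a, b]`, taken at left endpoints with step
`h = (b - a) / N`, overestimates the integral, and by at most `h (f a - f b)`: on each cell the
integral lies between `h f(left end)` and `h f(right end)`, and these bounds telescope. For
`f t = 1 / (1 + t ^ 2)` on `[0, x]` the integral is `arctan x` and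
`h (f 0 - f x) = (x / N) · x ^ 2 / (1 + x ^ 2)`.
-/

open Set intervalIntegral

namespace AntitoneOn

variable {f : ℝ → ℝ}

theorem sum_range_sub_integral_mem_Icc {N : ℕ} (hf : AntitoneOn f (Icc 0 N)) :
    ∑ i ∈ Finset.range N, f i - ∫ t in (0 : ℝ)..N, f t ∈ Icc 0 (f 0 - f N) := by
  have hf' : AntitoneOn f (Icc 0 (0 + N)) := by rwa [zero_add]
  have upper := hf'.integral_le_sum
  have lower := hf'.sum_le_integral
  simp only [zero_add] at upper lower
  have telescope : ∑ i ∈ Finset.range N, (f i - f ↑(i + 1)) = f 0 - f N := by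
    simpa using Finset.sum_range_sub' (fun i : ℕ => f i) N
  rw [Finset.sum_sub_distrib] at telescope
  constructor <;> linarith

theorem abs_riemann_sum_sub_integral_le {a b : ℝ} {N : ℕ} (hab : a ≤ b) (hN : 0 < N)
    (hf : AntitoneOn f (Icc a b)) :
    |(b - a) / N * ∑ i ∈ Finset.range N, f (a + i * ((b - a) / N)) - ∫ t in a..b, f t| ≤
      (b - a) / N * (f a - f b) := by
  set h := (b - a) / N
  have h_nonneg : 0 ≤ h := div_nonneg (sub_nonneg.2 hab) N.cast_nonneg
  have h_mul_N : h * N = b - a := div_mul_cancel₀ _ (by positivity)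
  set g : ℝ → ℝ := fun s => f (a + s * h)
  have hg : AntitoneOn g (Icc 0 N) := fun s hs t ht hst =>
    hf ⟨by nlinarith [hs.1], by nlinarith [hs.2]⟩ ⟨by nlinarith [ht.1], by nlinarith [ht.2]⟩
      (by gcongr)
  have integral_eq : ∫ t in a..b, f t = h * ∫ s in (0 : ℝ)..N, g s := by
    simp only [g, mul_comm _ h]
    rw [← smul_eq_mul, smul_integral_comp_add_mul, mul_zero, add_zero, h_mul_N, add_sub_cancel]
  obtain ⟨lower, upper⟩ := hg.sum_range_sub_integral_mem_Icc
  have g_zero : g 0 = f a := by simp [g]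
  have g_N : g N = f b := by simp [g, mul_comm _ h, h_mul_N]
  rw [g_zero, g_N] at upper
  rw [abs_le, integral_eq]
  constructor <;> linarith [mul_nonneg h_nonneg lower, mul_le_mul_of_nonneg_left upper h_nonneg]

end AntitoneOn

theorem antitoneOn_one_div_one_add_sq : AntitoneOn (fun t : ℝ => 1 / (1 + t ^ 2)) (Ici 0) :=
  fun s hs _ _ hst => one_div_le_one_div_of_le (by positivity) (by gcongr)

/-- Error bound for the upper Riemann sum of `arctan`: if `x > 0` and `N ≥ 1`, then
`S = (x / N) * ∑_{i=0}^{N-1} 1 / (1 + ((i x) / N) ^ 2)` satisfies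
`|S - arctan x| ≤ x ^ 3 / (N (1 + x ^ 2))`. -/
theorem arctan_riemann_sum_error (x : ℝ) (N : ℕ) (hx : 0 < x) (hN : 1 ≤ N) :
    |x / N * (∑ i ∈ Finset.range N, 1 / (1 + ((i : ℝ) * x / N) ^ 2)) - Real.arctan x| ≤
      x ^ 3 / (N * (1 + x ^ 2)) := by
  have error := (antitoneOn_one_div_one_add_sq.mono Icc_subset_Ici_self)
    |>.abs_riemann_sum_sub_integral_le hx.le hN
  simp only [sub_zero, zero_add, integral_one_div_one_add_sq, Real.arctan_zero] at error
  simp only [mul_div_assoc]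
  convert error using 1
  field_simp
  ring
end
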